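/- Let C be a tensor triangulated category with a weight structure w compatible with the tensor product, the tensor bifunctor being additive and triangulated in each variable. Fix morphisms u : M_- → M_+ and u' : M_-' → M_+' with M_-, M_-' ∈ C_{w≤0}, M_+, M_+' ∈ C_{w≥0}, and distinguished triangles exhibiting cones C₀[1] of u and C₀'[1] of u', with C₀ and C₀' both without weights -1 and 0. Let π₀ : M_- → Gr₀M_-, π₀' : M_-' → Gr₀M_-' and π₀^⊗ : M_- ⊗ M_-' → Gr₀(M_- ⊗ M_-') be the weight-0 quotients given by weight filtrations avoiding weight -1 (which exist by the main theorem, applied also to u ⊗ u'). Then Gr₀M_- ⊗ Gr₀M_-' lies in the heart C_{w=0}, and the unique morphism φ : Gr₀(M_- ⊗ M_-') → Gr₀M_- ⊗ Gr₀M_-' satisfying φ ∘ π₀^⊗ = π₀ ⊗ π₀' is an isomorphism. -/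

import Mathlib

open CategoryTheory CategoryTheory.Limits CategoryTheory.Pretriangulated

universe v u

/-- The shift `S[n]` of a class of objects `S`: the objects isomorphic to `A⟦n⟧`
for some `A ∈ S`. -/
def shiftedSet {C : Type u} [Category.{v} C] [HasShift C ℤ] (S : Set C) (n : ℤ) : Set C :=
  {X | ∃ A ∈ S, Nonempty (X ≅ A⟦n⟧)}

/-- A weight structure on a pretriangulated category `C`, following Bondarko. -/
structure WeightStructure (C : Type u) [Category.{v} C] [Preadditive C] [HasZeroObject C]
    [HasShift C ℤ] [∀ n : ℤ, (shiftFunctor C n).Additive] [Pretriangulated C] where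
  /-- the objects of weights `≤ 0` -/
  le : Set C
  /-- the objects of weights `≥ 0` -/
  ge : Set C
  /-- `C_{w ≤ 0}` is closed under retracts -/
  retract_le : ∀ (X M : C) (i : X ⟶ M) (r : M ⟶ X), i ≫ r = 𝟙 X → M ∈ le → X ∈ le
  /-- `C_{w ≥ 0}` is closed under retracts -/
  retract_ge : ∀ (X M : C) (i : X ⟶ M) (r : M ⟶ X), i ≫ r = 𝟙 X → M ∈ ge → X ∈ ge
  /-- `C_{w ≤ 0} ⊆ C_{w ≤ 1}` -/
  le_shift : le ⊆ shiftedSet le 1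
  /-- `C_{w ≥ 1} ⊆ C_{w ≥ 0}` -/
  ge_shift : shiftedSet ge 1 ⊆ ge
  /-- orthogonality -/
  orth : ∀ (M N : C), M ∈ le → N ∈ shiftedSet ge 1 → ∀ f : M ⟶ N, f = 0
  /-- existence of weight filtrations -/
  exists_wf : ∀ M : C, ∃ (A B : C) (a : A ⟶ M) (b : M ⟶ B) (δ : B ⟶ A⟦(1:ℤ)⟧),
    Triangle.mk a b δ ∈ (distTriang C) ∧ A ∈ le ∧ B ∈ shiftedSet ge 1

namespace WeightStructure

variable {C : Type u} [Category.{v} C] [Preadditive C] [HasZeroObject C]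
  [HasShift C ℤ] [∀ n : ℤ, (shiftFunctor C n).Additive] [Pretriangulated C]

/-- `C_{w ≤ n} := C_{w ≤ 0}[n]`. -/
def wLE (w : WeightStructure C) (n : ℤ) : Set C := shiftedSet w.le n

/-- `C_{w ≥ n} := C_{w ≥ 0}[n]`. -/
def wGE (w : WeightStructure C) (n : ℤ) : Set C := shiftedSet w.ge n

/-- The heart `C_{w = 0} := C_{w ≤ 0} ∩ C_{w ≥ 0}`. -/
def heart (w : WeightStructure C) : Set C := w.le ∩ w.ge

/-- An object `M` is without weights `m, …, n` if it admits a weight filtration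
avoiding these weights. -/
def WithoutWeights (w : WeightStructure C) (m n : ℤ) (M : C) : Prop :=
  ∃ (A B : C) (a : A ⟶ M) (b : M ⟶ B) (δ : B ⟶ A⟦(1:ℤ)⟧),
    Triangle.mk a b δ ∈ (distTriang C) ∧ A ∈ w.wLE (m - 1) ∧ B ∈ w.wGE (n + 1)

end WeightStructure

section Tensor

variable {C : Type u} [Category.{v} C] [Preadditive C] [HasZeroObject C]
  [HasShift C ℤ] [∀ n : ℤ, (shiftFunctor C n).Additive] [Pretriangulated C]

/-- A tensor structure on `C` compatible with the triangulation: a bifunctor which is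
additive and triangulated (commutes with the shift and preserves distinguished triangles)
in each variable. -/
structure TensorTriangulated (C : Type u) [Category.{v} C] [Preadditive C] [HasZeroObject C]
    [HasShift C ℤ] [∀ n : ℤ, (shiftFunctor C n).Additive] [Pretriangulated C] where
  /-- the tensor bifunctor -/
  T : C ⥤ C ⥤ C
  /-- additivity in the second variable -/
  addR : ∀ X : C, (T.obj X).Additive
  /-- additivity in the first variable -/
  addL : ∀ Y : C, (T.flip.obj Y).Additive
  /-- commutation with the shift in the second variable -/
  commR : ∀ X : C, (T.obj X).CommShift ℤ
  /-- commutation with the shift in the first variable -/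
  commL : ∀ Y : C, (T.flip.obj Y).CommShift ℤ
  /-- exactness in the second variable -/
  trR : ∀ (X A B Z : C) (f : A ⟶ B) (g : B ⟶ Z) (h : Z ⟶ A⟦(1:ℤ)⟧),
    Triangle.mk f g h ∈ (distTriang C) →
    Triangle.mk ((T.obj X).map f) ((T.obj X).map g)
      ((T.obj X).map h ≫ (@Functor.CommShift.commShiftIso _ _ _ _ (T.obj X) ℤ _ _ _ (commR X) (1:ℤ)).hom.app A) ∈ (distTriang C)
  /-- exactness in the first variable -/
  trL : ∀ (Y A B Z : C) (f : A ⟶ B) (g : B ⟶ Z) (h : Z ⟶ A⟦(1:ℤ)⟧),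
    Triangle.mk f g h ∈ (distTriang C) →
    Triangle.mk ((T.flip.obj Y).map f) ((T.flip.obj Y).map g)
      ((T.flip.obj Y).map h ≫ (@Functor.CommShift.commShiftIso _ _ _ _ (T.flip.obj Y) ℤ _ _ _ (commL Y) (1:ℤ)).hom.app A) ∈ (distTriang C)

/-- The tensor product of two morphisms. -/
def TensorTriangulated.tmul (𝒯 : TensorTriangulated C) {X X' Y Y' : C}
    (f : X ⟶ Y) (g : X' ⟶ Y') : (𝒯.T.obj X).obj X' ⟶ (𝒯.T.obj Y).obj Y' :=
  (𝒯.T.map f).app X' ≫ (𝒯.T.obj Y).map g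

/-- The weight structure `w` is compatible with the tensor structure `𝒯`. -/
def TensorTriangulated.Compatible (𝒯 : TensorTriangulated C) (w : WeightStructure C) : Prop :=
  (∀ X Y : C, X ∈ w.le → Y ∈ w.le → (𝒯.T.obj X).obj Y ∈ w.le) ∧
  (∀ X Y : C, X ∈ w.ge → Y ∈ w.ge → (𝒯.T.obj X).obj Y ∈ w.ge)

end Tensor

/-!
Since `Hom(C_{w≤-1}, C_{w≥0}) = 0`, a weight-zero quotient `π : M ⟶ G` (fibre `A` of weights
`≤ -2`, `G` of weights `≥ 0`) is initial among morphisms from `M` to objects of weights `≥ 0`;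
in particular it is unique up to unique isomorphism. By the octahedron for
`π ⊗ π' = (G ⊗ π') ∘ (π ⊗ M')`, the fibre of `π ⊗ π'` is an extension of `G ⊗ A'` by `A ⊗ M'`,
which have weights `≤ -2` by compatibility of `w` with `⊗`. So `π ⊗ π'` is again a weight-zero
quotient, of `M ⊗ M'`, and `φ` is the comparison isomorphism between two of them.
-/

namespace WeightStructure

variable {C : Type u} [Category.{v} C] [Preadditive C] [HasZeroObject C]
  [HasShift C ℤ] [∀ n : ℤ, (shiftFunctor C n).Additive] [Pretriangulated C]
  (w : WeightStructure C)

/-- `π : M ⟶ G` is the weight-zero quotient of a weight filtration of `M` avoiding weight `-1`. -/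
def IsGr₀Quotient {M G : C} (π : M ⟶ G) : Prop :=
  G ∈ w.ge ∧ ∃ (A : C) (a : A ⟶ M) (δ : G ⟶ A⟦(1:ℤ)⟧),
    Triangle.mk a π δ ∈ distTriang C ∧ A ∈ w.wLE (-2)

lemma mem_le_of_iso {X Y : C} (e : X ≅ Y) (h : Y ∈ w.le) : X ∈ w.le :=
  w.retract_le X Y e.hom e.inv e.hom_inv_id h

lemma mem_le_of_mem_wLE_zero {X : C} (h : X ∈ w.wLE 0) : X ∈ w.le := by
  obtain ⟨A, hA, ⟨e⟩⟩ := h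
  exact w.mem_le_of_iso (e.trans ((shiftFunctorZero C ℤ).app A)) hA

lemma shift_mem_wLE {X : C} {m : ℤ} (k : ℤ) {n : ℤ} (h : X ∈ w.wLE m) (hn : m + k = n) :
    X⟦k⟧ ∈ w.wLE n := by
  obtain ⟨A, hA, ⟨e⟩⟩ := h
  exact ⟨A, hA, ⟨((shiftFunctor C k).mapIso e).trans ((shiftFunctorAdd' C m k n hn).symm.app A)⟩⟩

lemma wLE_subset_wLE_of_add_one_eq {m n : ℤ} (h : m + 1 = n) : w.wLE m ⊆ w.wLE n := by
  rintro X ⟨A, hA, ⟨e⟩⟩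
  obtain ⟨B, hB, ⟨f⟩⟩ := w.le_shift hA
  exact ⟨B, hB, ⟨e.trans (((shiftFunctor C m).mapIso f).trans
    ((shiftFunctorAdd' C 1 m n (by omega)).symm.app B))⟩⟩

lemma hom_eq_zero_of_mem_wLE_neg_one {X Y : C} (hX : X ∈ w.wLE (-1)) (hY : Y ∈ w.ge)
    (f : X ⟶ Y) : f = 0 := by
  obtain ⟨A, hA, ⟨e⟩⟩ := hX
  have h : ((shiftFunctorCompIsoId C (-1:ℤ) 1 (by ring)).inv.app A ≫
      e.inv⟦(1:ℤ)⟧' ≫ f⟦(1:ℤ)⟧' : A ⟶ Y⟦(1:ℤ)⟧) = 0 :=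
    w.orth _ _ hA ⟨Y, hY, ⟨Iso.refl _⟩⟩ _
  rw [Preadditive.IsIso.comp_left_eq_zero, Preadditive.IsIso.comp_left_eq_zero] at h
  exact (shiftFunctor C (1:ℤ)).map_injective (by rw [h, Functor.map_zero])

lemma mem_le_of_distTriang {T : Triangle C} (hT : T ∈ distTriang C)
    (h₁ : T.obj₁ ∈ w.le) (h₃ : T.obj₃ ∈ w.le) : T.obj₂ ∈ w.le := by
  obtain ⟨A, B, a, b, δ, hd, hA, hB⟩ := w.exists_wf T.obj₂
  obtain ⟨c, hc⟩ := Triangle.yoneda_exact₂ T hT b (w.orth _ _ h₁ hB _)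
  have hb : b = 0 := by rw [hc, w.orth _ _ h₃ hB c, comp_zero]
  -- `b = 0` makes `a : A ⟶ T.obj₂` split epi, so `T.obj₂` is a retract of `A`
  obtain ⟨r, hr⟩ := Triangle.coyoneda_exact₂ _ hd (𝟙 T.obj₂)
    ((Category.id_comp _).trans hb)
  exact w.retract_le _ A r a hr.symm hA

lemma mem_wLE_of_distTriang (n : ℤ) {T : Triangle C} (hT : T ∈ distTriang C)
    (h₁ : T.obj₁ ∈ w.wLE n) (h₃ : T.obj₃ ∈ w.wLE n) : T.obj₂ ∈ w.wLE n := by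
  have h : T.obj₂⟦-n⟧ ∈ w.le :=
    w.mem_le_of_distTriang (Triangle.shift_distinguished T hT (-n))
      (w.mem_le_of_mem_wLE_zero (w.shift_mem_wLE (-n) h₁ (by ring)))
      (w.mem_le_of_mem_wLE_zero (w.shift_mem_wLE (-n) h₃ (by ring)))
  exact ⟨_, h, ⟨((shiftFunctorCompIsoId C (-n) n (by ring)).app T.obj₂).symm⟩⟩

namespace IsGr₀Quotient

variable {w} {M G H : C} {π : M ⟶ G}

lemma exists_desc (hπ : w.IsGr₀Quotient π) (hH : H ∈ w.ge) (ψ : M ⟶ H) :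
    ∃ φ : G ⟶ H, π ≫ φ = ψ := by
  obtain ⟨-, A, a, δ, hT, hA⟩ := hπ
  obtain ⟨φ, hφ⟩ := Triangle.yoneda_exact₂ _ hT ψ
    (w.hom_eq_zero_of_mem_wLE_neg_one (w.wLE_subset_wLE_of_add_one_eq (by norm_num) hA) hH _)
  exact ⟨φ, hφ.symm⟩

lemma hom_ext (hπ : w.IsGr₀Quotient π) (hH : H ∈ w.ge) {f g : G ⟶ H}
    (h : π ≫ f = π ≫ g) : f = g := by
  obtain ⟨-, A, a, δ, hT, hA⟩ := hπ
  obtain ⟨k, hk⟩ := Triangle.yoneda_exact₃ _ hT (f - g)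
    ((Preadditive.comp_sub _ _ _).trans (sub_eq_zero.mpr h))
  have hk0 : k = 0 := w.hom_eq_zero_of_mem_wLE_neg_one (w.shift_mem_wLE 1 hA (by ring)) hH k
  exact sub_eq_zero.mp (hk.trans (by rw [hk0]; exact comp_zero))

lemma existsUnique_desc (hπ : w.IsGr₀Quotient π) (hH : H ∈ w.ge) (ψ : M ⟶ H) :
    ∃! φ : G ⟶ H, π ≫ φ = ψ :=
  let ⟨φ, hφ⟩ := hπ.exists_desc hH ψ
  ⟨φ, hφ, fun _ h => hπ.hom_ext hH (h.trans hφ.symm)⟩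

lemma isIso_of_comp_eq {π' : M ⟶ H} (hπ : w.IsGr₀Quotient π) (hπ' : w.IsGr₀Quotient π')
    {φ : G ⟶ H} (hφ : π ≫ φ = π') : IsIso φ := by
  obtain ⟨ψ, hψ⟩ := hπ'.exists_desc hπ.1 π
  refine ⟨ψ, hπ.hom_ext hπ.1 ?_, hπ'.hom_ext hπ'.1 ?_⟩
  · rw [reassoc_of% hφ, hψ, Category.comp_id]
  · rw [reassoc_of% hψ, hφ, Category.comp_id]

lemma mem_heart (hπ : w.IsGr₀Quotient π) (hM : M ∈ w.le) : G ∈ w.heart := by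
  obtain ⟨hG, A, a, δ, hT, hA⟩ := hπ
  have hA₁ : A⟦(1:ℤ)⟧ ∈ w.wLE (-1) := w.shift_mem_wLE 1 hA (by ring)
  have hA₁' : A⟦(1:ℤ)⟧ ∈ w.le :=
    w.mem_le_of_mem_wLE_zero (w.wLE_subset_wLE_of_add_one_eq (by norm_num) hA₁)
  exact ⟨w.mem_le_of_distTriang (rot_of_distTriang _ hT) hM hA₁', hG⟩

end IsGr₀Quotient

end WeightStructure

namespace TensorTriangulated

variable {C : Type u} [Category.{v} C] [Preadditive C] [HasZeroObject C]
  [HasShift C ℤ] [∀ n : ℤ, (shiftFunctor C n).Additive] [Pretriangulated C]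
  {𝒯 : TensorTriangulated C} {w : WeightStructure C}

lemma Compatible.tensor_mem_wLE_left (hcomp : 𝒯.Compatible w) {X Y : C} {n : ℤ}
    (hX : X ∈ w.wLE n) (hY : Y ∈ w.le) : (𝒯.T.obj X).obj Y ∈ w.wLE n := by
  obtain ⟨X₀, hX₀, ⟨e⟩⟩ := hX
  let := 𝒯.commL Y
  exact ⟨(𝒯.T.obj X₀).obj Y, hcomp.1 _ _ hX₀ hY,
    ⟨((𝒯.T.flip.obj Y).mapIso e).trans (((𝒯.T.flip.obj Y).commShiftIso n).app X₀)⟩⟩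

lemma Compatible.tensor_mem_wLE_right (hcomp : 𝒯.Compatible w) {X Y : C} {n : ℤ}
    (hX : X ∈ w.le) (hY : Y ∈ w.wLE n) : (𝒯.T.obj X).obj Y ∈ w.wLE n := by
  obtain ⟨Y₀, hY₀, ⟨e⟩⟩ := hY
  let := 𝒯.commR X
  exact ⟨(𝒯.T.obj X).obj Y₀, hcomp.1 _ _ hX hY₀,
    ⟨((𝒯.T.obj X).mapIso e).trans (((𝒯.T.obj X).commShiftIso n).app Y₀)⟩⟩

lemma Compatible.isGr₀Quotient_tmul [IsTriangulated C] (hcomp : 𝒯.Compatible w)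
    {M M' G G' : C} {π : M ⟶ G} {π' : M' ⟶ G'} (hπ : w.IsGr₀Quotient π)
    (hπ' : w.IsGr₀Quotient π') (hM : M ∈ w.le) (hM' : M' ∈ w.le) :
    w.IsGr₀Quotient (𝒯.tmul π π') := by
  have hGle := (hπ.mem_heart hM).1
  obtain ⟨hG, A, a, δ, hT, hA⟩ := hπ
  obtain ⟨hG', A', a', δ', hT', hA'⟩ := hπ'
  obtain ⟨F, f, g, hF⟩ := distinguished_cocone_triangle₁ (𝒯.tmul π π')
  have O := Triangulated.someOctahedron' rfl (𝒯.trL M' _ _ _ a π δ hT)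
    (𝒯.trR G _ _ _ a' π' δ' hT') hF
  exact ⟨hcomp.2 _ _ hG hG', F, f, g, hF, w.mem_wLE_of_distTriang (-2) O.mem
    (hcomp.tensor_mem_wLE_left hA hM') (hcomp.tensor_mem_wLE_right hGle hA')⟩

end TensorTriangulated

/-- `Gr₀` is compatible with tensor products: the unique morphism
`Gr₀(M₋ ⊗ M₋') ⟶ Gr₀ M₋ ⊗ Gr₀ M₋'` compatible with the weight-zero quotients is
an isomorphism (and `Gr₀ M₋ ⊗ Gr₀ M₋'` lies in the heart). -/
theorem gr0_tensor_iso
    {C : Type u} [Category.{v} C] [Preadditive C] [HasZeroObject C]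
    [HasShift C ℤ] [∀ n : ℤ, (shiftFunctor C n).Additive] [Pretriangulated C]
    [IsTriangulated C]
    (𝒯 : TensorTriangulated C) (w : WeightStructure C) (hcomp : 𝒯.Compatible w)
    (Mm Mp Mm' Mp' C₀ C₀' : C)
    (u : Mm ⟶ Mp) (u' : Mm' ⟶ Mp')
    (hMm : Mm ∈ w.le) (hMp : Mp ∈ w.ge) (hMm' : Mm' ∈ w.le) (hMp' : Mp' ∈ w.ge)
    (vm : C₀ ⟶ Mm) (vp : Mp ⟶ C₀⟦(1:ℤ)⟧)
    (hu : Triangle.mk vm u vp ∈ distTriang C)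
    (vm' : C₀' ⟶ Mm') (vp' : Mp' ⟶ C₀'⟦(1:ℤ)⟧)
    (hu' : Triangle.mk vm' u' vp' ∈ distTriang C)
    (hC₀ : w.WithoutWeights (-1) 0 C₀) (hC₀' : w.WithoutWeights (-1) 0 C₀')
    -- a weight filtration of `M₋` avoiding weight `-1`, with quotient `π₀ : M₋ ⟶ G`
    (A G : C) (aG : A ⟶ Mm) (π₀ : Mm ⟶ G) (δG : G ⟶ A⟦(1:ℤ)⟧)
    (hTG : Triangle.mk aG π₀ δG ∈ distTriang C)
    (hA : A ∈ w.wLE (-2)) (hG : G ∈ w.ge)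
    -- a weight filtration of `M₋'` avoiding weight `-1`, with quotient `π₀' : M₋' ⟶ G'`
    (A' G' : C) (aG' : A' ⟶ Mm') (π₀' : Mm' ⟶ G') (δG' : G' ⟶ A'⟦(1:ℤ)⟧)
    (hTG' : Triangle.mk aG' π₀' δG' ∈ distTriang C)
    (hA' : A' ∈ w.wLE (-2)) (hG' : G' ∈ w.ge)
    -- a weight filtration of `M₋ ⊗ M₋'` avoiding weight `-1`, with quotient `πt`
    (At Gt : C) (aGt : At ⟶ (𝒯.T.obj Mm).obj Mm')
    (πt : (𝒯.T.obj Mm).obj Mm' ⟶ Gt) (δGt : Gt ⟶ At⟦(1:ℤ)⟧)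
    (hTGt : Triangle.mk aGt πt δGt ∈ distTriang C)
    (hAt : At ∈ w.wLE (-2)) (hGt : Gt ∈ w.ge) :
    (𝒯.T.obj G).obj G' ∈ w.heart ∧
    (∃! φ : Gt ⟶ (𝒯.T.obj G).obj G', πt ≫ φ = 𝒯.tmul π₀ π₀') ∧
    (∀ φ : Gt ⟶ (𝒯.T.obj G).obj G', πt ≫ φ = 𝒯.tmul π₀ π₀' → IsIso φ) := by
  have hπ : w.IsGr₀Quotient π₀ := ⟨hG, A, aG, δG, hTG, hA⟩
  have hπ' : w.IsGr₀Quotient π₀' := ⟨hG', A', aG', δG', hTG', hA'⟩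
  have hπt : w.IsGr₀Quotient πt := ⟨hGt, At, aGt, δGt, hTGt, hAt⟩
  have hππ' := hcomp.isGr₀Quotient_tmul hπ hπ' hMm hMm'
  exact ⟨hππ'.mem_heart (hcomp.1 _ _ hMm hMm'), hπt.existsUnique_desc hππ'.1 _,
    fun _ hφ => hπt.isIso_of_comp_eq hππ' hφ⟩
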